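/- Let p be an odd prime and suppose L_p is embedded in a harmonic matroid M. If (j,i) ≠ (s,t) for i,j,s,t ∈ Z_p, then C(j,i) ≠ C(s,t), and C(j,i) and C(s,t) intersect in exactly one point. -/

import Mathlib

open Set

namespace HarmonicPaper

variable {α : Type*}

/-- Extended rank of a set in a matroid: supremum of cardinalities of independent subsets. -/
noncomputable def eRk (M : Matroid α) (S : Set α) : ℕ∞ :=
  ⨆ I ∈ {I : Set α | M.Indep I ∧ I ⊆ S}, I.encard

/-- A set of points is collinear if it has rank at most 2. -/
def Collin (M : Matroid α) (S : Set α) : Prop := eRk M S ≤ 2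

/-- The six collinear triples of the non-Fano configuration on `y,x,z,o,q,r,s`. -/
def nonFanoLines (y x z o q r s : α) : Set (Set α) :=
  {{y, x, z}, {y, o, q}, {y, r, s}, {z, o, s}, {z, q, r}, {x, q, s}}

/-- `HP M y x z o q r s` : the restriction of `M` to the seven pairwise distinct points
`y,x,z,o,q,r,s` is a simple rank-3 matroid whose collinear triples are exactly those of the
non-Fano matroid `F₇⁻`, or exactly those together with `{x,o,r}` (the Fano matroid `F₇`). -/
def HP (M : Matroid α) (y x z o q r s : α) : Prop :=
  List.Pairwise (· ≠ ·) [y, x, z, o, q, r, s] ∧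
  ({y, x, z, o, q, r, s} : Set α) ⊆ M.E ∧
  eRk M {y, x, z, o, q, r, s} = 3 ∧
  (∀ a ∈ ({y, x, z, o, q, r, s} : Set α), ∀ b ∈ ({y, x, z, o, q, r, s} : Set α),
    a ≠ b → eRk M {a, b} = 2) ∧
  ((∀ a ∈ ({y, x, z, o, q, r, s} : Set α), ∀ b ∈ ({y, x, z, o, q, r, s} : Set α),
      ∀ c ∈ ({y, x, z, o, q, r, s} : Set α), a ≠ b → a ≠ c → b ≠ c →
      (Collin M {a, b, c} ↔ ({a, b, c} : Set α) ∈ nonFanoLines y x z o q r s)) ∨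
   (∀ a ∈ ({y, x, z, o, q, r, s} : Set α), ∀ b ∈ ({y, x, z, o, q, r, s} : Set α),
      ∀ c ∈ ({y, x, z, o, q, r, s} : Set α), a ≠ b → a ≠ c → b ≠ c →
      (Collin M {a, b, c} ↔
        ({a, b, c} : Set α) ∈ insert {x, o, r} (nonFanoLines y x z o q r s))))

/-- `Hc M y z x x'` : `x'` is a harmonic conjugate of `x` with respect to `y` and `z`. -/
def Hc (M : Matroid α) (y z x x' : α) : Prop :=
  ∃ o q r s, HP M y x z o q r s ∧ M.closure {y, z} ∩ M.closure {o, r} = {x'}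

/-- A matroid is harmonic if every harmonic configuration `HP` yields a (unique) harmonic
conjugate, which moreover depends only on `x, y, z` and not on the choice of `o,q,r,s`. -/
def IsHarmonic (M : Matroid α) : Prop :=
  (∀ y x z o q r s, HP M y x z o q r s →
    ∃ x', M.closure {y, z} ∩ M.closure {o, r} = {x'}) ∧
  (∀ y x z o q r s o' q' r' s', HP M y x z o q r s → HP M y x z o' q' r' s' →
    M.closure {y, z} ∩ M.closure {o, r} = M.closure {y, z} ∩ M.closure {o', r'})

/-- One step of harmonic closure. -/
def hStep (M : Matroid α) (S : Set α) : Set α :=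
  S ∪ {x | ∃ a ∈ S, ∃ b ∈ S, ∃ c ∈ S, Hc M a c b x}

/-- Iterated harmonic closure steps. -/
def hIter (M : Matroid α) : ℕ → Set α → Set α
  | 0, S => S
  | n + 1, S => hStep M (hIter M n S)

/-- The harmonic closure `h^∞(S)`. -/
def hCl (M : Matroid α) (S : Set α) : Set α := ⋃ n, hIter M n S

end HarmonicPaper
namespace HarmonicPaper

variable {α : Type*}

/-- The points of the matroid `L_p`: `A i = [0,i,1]`, `B i = [1,i,1]`, `C i = [1,i,0]`,
and `V = [0,1,0]`. -/
inductive LpPoint (p : ℕ) : Type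
  | A : ZMod p → LpPoint p
  | B : ZMod p → LpPoint p
  | C : ZMod p → LpPoint p
  | V : LpPoint p

open LpPoint

/-- The lines (maximal collinear sets of size ≥ 3) of `L_p`:
`⟨1,0,0⟩_p`, `⟨1,0,-1⟩_p`, `⟨0,0,1⟩_p`, and `⟨j,-1,i⟩_p = {[0,i,1],[1,i+j,1],[1,j,0]}`. -/
def LpLines (p : ℕ) : Set (Set (LpPoint p)) :=
  {S | S = {x | ∃ i, x = A i} ∪ {V} ∨ S = {x | ∃ i, x = B i} ∪ {V} ∨
       S = {x | ∃ i, x = C i} ∪ {V} ∨ ∃ i j, S = {A i, B (i + j), C j}}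

/-- Independence in the rank-3 simple matroid `L_p`: any set of at most two points is
independent, and a three-point set is independent iff it lies on no line. -/
def LpIndep (p : ℕ) (S : Set (LpPoint p)) : Prop :=
  S.encard ≤ 2 ∨ (S.encard = 3 ∧ ∀ L ∈ LpLines p, ¬ S ⊆ L)

/-- An embedding of `L_p` in the matroid `M`: an injection of the ground set of `L_p` into
the points of `M` under which independence is preserved and reflected. -/
def IsLpEmbedding (p : ℕ) (M : Matroid α) (f : LpPoint p → α) : Prop :=
  Function.Injective f ∧ Set.range f ⊆ M.E ∧
  ∀ S : Set (LpPoint p), LpIndep p S ↔ M.Indep (f '' S)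

/-- `⟨j,-1,i⟩ := h^∞(⟨j,-1,i⟩_p)`, the harmonic closure in `M` of the line
`{[0,i,1], [1,i+j,1], [1,j,0]}` of `L_p`. -/
def lineJI {p : ℕ} (M : Matroid α) (f : LpPoint p → α) (j i : ZMod p) : Set α :=
  hCl M (f '' {A i, B (i + j), C j})

/-- The family of points `[1,s,-k]` (`g s k` denotes `[1,s,-k]`) produced by the key lemma:
it agrees with the like-named points `[1,s,0]` and `[1,s,1]` of `L_p` and satisfies
properties (i) and (ii) of the key lemma. -/
def IsKeyFamily {p : ℕ} (M : Matroid α) (f : LpPoint p → α)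
    (g : ZMod p → ZMod p → α) : Prop :=
  (∀ s, g s 0 = f (C s)) ∧ (∀ s, g s (-1) = f (B s)) ∧
  (∀ k i j : ZMod p, (⋂ t : ZMod p, lineJI M f (j + k * t) (i + t)) = {g (j - k * i) k}) ∧
  (∀ k i j t : ZMod p, Collin M {f (A (i + t)), f (C (j + k * t)), g (j - k * i) k})

/-- `C(j,i) = {[0,i,1]} ∪ {[1,j-ki,-k] : k ∈ Z_p}`. -/
def cSet {p : ℕ} (f : LpPoint p → α) (g : ZMod p → ZMod p → α) (j i : ZMod p) : Set α :=
  insert (f (A i)) {x | ∃ k : ZMod p, x = g (j - k * i) k}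

/-- The point set `P = {[1,s,-k]} ∪ {[0,i,1]} ∪ {[0,1,0]}`. -/
def pSet {p : ℕ} (f : LpPoint p → α) (g : ZMod p → ZMod p → α) : Set α :=
  {x | ∃ s k, x = g s k} ∪ {x | ∃ i, x = f (A i)} ∪ {f V}

/-- The line family `𝓛₁ = {⟨0,0,1⟩} ∪ {⟨1,0,k⟩ : k ∈ Z_p}`, where
`⟨0,0,1⟩ = {[1,t,0] : t} ∪ {[0,1,0]}`, `⟨1,0,0⟩ = {[0,t,1] : t} ∪ {[0,1,0]}` and
`⟨1,0,k⟩ = {[1,t,-k⁻¹] : t} ∪ {[0,1,0]}` for `k ≠ 0`. -/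
def lFam1 {p : ℕ} [Fact p.Prime] (f : LpPoint p → α) (g : ZMod p → ZMod p → α) :
    Set (Set α) :=
  {S | S = {x | ∃ t, x = f (C t)} ∪ {f V} ∨
       S = {x | ∃ t, x = f (A t)} ∪ {f V} ∨
       ∃ k : ZMod p, k ≠ 0 ∧ S = {x | ∃ t, x = g t k⁻¹} ∪ {f V}}

/-- The line family `𝓛₂ = {C(j,i) : i,j ∈ Z_p}`. -/
def lFam2 {p : ℕ} (f : LpPoint p → α) (g : ZMod p → ZMod p → α) : Set (Set α) :=
  {S | ∃ i j : ZMod p, S = cSet f g j i}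

/-- The line set `𝓛 = 𝓛₁ ∪ 𝓛₂`. -/
def lFam {p : ℕ} [Fact p.Prime] (f : LpPoint p → α) (g : ZMod p → ZMod p → α) :
    Set (Set α) :=
  lFam1 f g ∪ lFam2 f g

end HarmonicPaper

/-!
Each `C(j,i)` has at least two points, so it suffices to see that two of them meet in exactly one
point. This holds because the points `[1,s,-k]` are pairwise distinct and distinct from the
points `[0,i,1]`: then `C(j,i)` and `C(s,t)` meet only in `[0,i,1]` when `i = t`, and only in
`[1,j-ki,-k]` with `k(i-t) = j-s` when `i ≠ t`.

Distinctness comes from the collinear triples `{[0,i,1], [1,a+ki,0], [1,a,-k]}`. If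
`[1,a,-k] = [1,b,-k'] =: x` with `(a,k) ≠ (b,k')`, then, as `p ≥ 3`, some `i` has
`a+ki ≠ b+k'i` and `{[0,i,1], x}` independent; the line they span then contains the
non-collinear triple `[0,i,1], [1,a+ki,0], [1,b+k'i,0]`. Here `x` is not a loop because `M` has
none: a loop is the harmonic conjugate in every configuration, so the harmonic closure of a line
`⟨j,-1,i⟩_p` adds at most the loop to it. Since `[1,c,-1]` lies on the two lines `⟨c,-1,0⟩` and
`⟨c+1,-1,1⟩`, whose points in `L_p` are disjoint, every `[1,c,-1]` is the loop; hence the loop lies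
on every line `⟨j,-1,i⟩`, and the key lemma identifies it with the point `[1,0,1]` of `L_p`.
-/

namespace HarmonicPaper
open LpPoint

variable {α : Type*}

lemma exists_not_and_not_of_subsingleton {β : Type*} (hβ : 2 < ENat.card β) {P Q : β → Prop}
    (hP : {b | P b}.Subsingleton) (hQ : {b | Q b}.Subsingleton) : ∃ b, ¬ P b ∧ ¬ Q b := by
  by_contra! h
  have hcover : (univ : Set β) ⊆ {b | P b} ∪ {b | Q b} := fun b _ ↦ (em (P b)).imp id (h b)
  have := calc ENat.card β = (univ : Set β).encard := (encard_univ β).symm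
    _ ≤ {b | P b}.encard + {b | Q b}.encard :=
      (encard_le_encard hcover).trans (encard_union_le _ _)
    _ ≤ 1 + 1 :=
      add_le_add (encard_le_one_iff_subsingleton.2 hP) (encard_le_one_iff_subsingleton.2 hQ)
  exact (this.trans_lt' hβ).false

lemma subsingleton_setOf_add_mul_eq {R : Type*} [CommRing R] [NoZeroDivisors R] {a b k k' : R}
    (h : (a, k) ≠ (b, k')) : {i | a + k * i = b + k' * i}.Subsingleton := by
  intro i₁ (h₁ : a + k * i₁ = b + k' * i₁) i₂ (h₂ : a + k * i₂ = b + k' * i₂)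
  have hk : (k - k') * (i₁ - i₂) = 0 := by linear_combination h₁ - h₂
  rcases mul_eq_zero.1 hk with hk | hi
  · refine absurd (Prod.ext ?_ (sub_eq_zero.1 hk)) h
    linear_combination h₁ - i₁ * hk
  · exact sub_eq_zero.1 hi

section Rank

variable {M : Matroid α}

lemma eRk_eq_matroid_eRk (S : Set α) : eRk M S = M.eRk S :=
  le_antisymm (iSup₂_le fun _ hI ↦ hI.1.encard_le_eRk_of_subset hI.2)
    (Matroid.eRk_le_iff.2 fun I hIS hI ↦
      le_iSup₂_of_le (f := fun I (_ : I ∈ {I | M.Indep I ∧ I ⊆ S}) ↦ I.encard) I ⟨hI, hIS⟩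
        le_rfl)

lemma collin_iff_eRk_le {S : Set α} : Collin M S ↔ M.eRk S ≤ 2 := by
  rw [Collin, eRk_eq_matroid_eRk]

lemma Collin.mem_closure {u v w : α} (h : Collin M {u, v, w}) (huw : M.Indep {u, w})
    (hne : u ≠ w) (hv : v ∈ M.E) : v ∈ M.closure {u, w} := by
  by_contra hvu
  have h3 := M.eRk_insert_eq_add_one ⟨hv, hvu⟩
  have h2 := collin_iff_eRk_le.1 h
  rw [Set.insert_comm, h3, huw.eRk_eq_encard, Set.encard_pair hne] at h2
  norm_num at h2

lemma _root_.Matroid.IsNonloop.subsingleton_setOf_not_indep_pair {x : α}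
    (hx : M.IsNonloop x) {ι : Type*} {e : ι → α} (he : Function.Injective e)
    (hpair : ∀ i j, M.Indep {e i, e j}) : {i | ¬ M.Indep {e i, x}}.Subsingleton := by
  have hcl : ∀ i, ¬ M.Indep {e i, x} → e i ∈ M.closure {x} := fun i hi ↦ by
    by_contra hni
    exact hi (hx.indep.insert_indep_iff.2 (Or.inl ⟨(hpair i i).subset_ground (by simp), hni⟩))
  intro i₁ h₁ i₂ h₂
  by_contra hne
  have h2 := (hpair i₁ i₂).eRk_eq_encard ▸ M.eRk_mono (pair_subset (hcl i₁ h₁) (hcl i₂ h₂))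
  rw [M.eRk_closure_eq, hx.indep.eRk_eq_encard, encard_pair (he.ne hne), encard_singleton] at h2
  norm_num at h2

end Rank

section HarmonicClosure

variable {M : Matroid α}

lemma Hc.mem_closure {y z x x' : α} (h : Hc M y z x x') : x' ∈ M.closure {y, z} := by
  obtain ⟨o, q, r, s, -, h⟩ := h
  exact (h.symm.subset rfl).1

lemma Hc.eq_of_isLoop {y z x x' ℓ : α} (h : Hc M y z x x') (hℓ : M.IsLoop ℓ) : x' = ℓ := by
  obtain ⟨o, q, r, s, -, h⟩ := h
  exact (h.subset ⟨hℓ.mem_closure _, hℓ.mem_closure _⟩).symm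

lemma hStep_mono {S T : Set α} (h : S ⊆ T) : hStep M S ⊆ hStep M T := by
  rintro x (hx | ⟨a, ha, b, hb, c, hc, hx⟩)
  exacts [Or.inl (h hx), Or.inr ⟨a, h ha, b, h hb, c, h hc, hx⟩]

lemma hCl_subset {S T : Set α} (hST : S ⊆ T) (hT : hStep M T ⊆ T) : hCl M S ⊆ T := by
  refine iUnion_subset fun n ↦ ?_
  induction n with
  | zero => exact hST
  | succ n ih => exact (hStep_mono ih).trans hT

lemma hCl_subset_ground {S : Set α} (hS : S ⊆ M.E) : hCl M S ⊆ M.E := by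
  refine hCl_subset hS ?_
  rintro x (hx | ⟨a, -, b, -, c, -, hx⟩)
  exacts [hx, M.closure_subset_ground _ hx.mem_closure]

lemma hCl_subset_insert_of_isLoop {ℓ : α} (hℓ : M.IsLoop ℓ) (S : Set α) :
    hCl M S ⊆ insert ℓ S := by
  refine hCl_subset (subset_insert _ _) ?_
  rintro x (hx | ⟨a, -, b, -, c, -, hx⟩)
  exacts [hx, Or.inl (hx.eq_of_isLoop hℓ)]

end HarmonicClosure

section Lp

variable {p : ℕ}

def IsLpTriangle (S : Set (LpPoint p)) : Prop :=
  S.encard = 3 ∧ ∀ L ∈ LpLines p, ¬ S ⊆ L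

lemma isLpTriangle_A_C_C (i : ZMod p) {j₁ j₂ : ZMod p} (hj : j₁ ≠ j₂) :
    IsLpTriangle {A i, C j₁, C j₂} := by
  refine ⟨encard_eq_three.2 ⟨_, _, _, by simp, by simp, by simp [hj], rfl⟩, ?_⟩
  rintro L (rfl | rfl | rfl | ⟨i', j', rfl⟩) hL <;> simp [insert_subset_iff] at hL
  exact hj (hL.2.1.trans hL.2.2.symm)

lemma isLpTriangle_A_C_A {i₁ i₂ : ZMod p} (hi : i₁ ≠ i₂) (j : ZMod p) :
    IsLpTriangle {A i₁, C j, A i₂} := by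
  refine ⟨encard_eq_three.2 ⟨_, _, _, by simp, by simp [hi], by simp, rfl⟩, ?_⟩
  rintro L (rfl | rfl | rfl | ⟨i', j', rfl⟩) hL <;> simp [insert_subset_iff] at hL
  exact hi (hL.1.trans hL.2.2.symm)

end Lp

namespace IsLpEmbedding

variable {p : ℕ} {M : Matroid α} {f : LpPoint p → α}

lemma mem_ground (hf : IsLpEmbedding p M f) (P : LpPoint p) : f P ∈ M.E :=
  hf.2.1 (mem_range_self P)

lemma eRk_image_eq_three (hf : IsLpEmbedding p M f) {S : Set (LpPoint p)}
    (hS : IsLpTriangle S) : M.eRk (f '' S) = 3 := by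
  rw [((hf.2.2 S).1 (Or.inr hS)).eRk_eq_encard, hf.1.encard_image, hS.1]

lemma indep_pair (hf : IsLpEmbedding p M f) (P Q : LpPoint p) : M.Indep {f P, f Q} := by
  have hPQ : LpIndep p {P, Q} := Or.inl ((encard_insert_le _ _).trans (by norm_num))
  simpa [image_insert_eq] using (hf.2.2 _).1 hPQ

lemma isNonloop (hf : IsLpEmbedding p M f) (P : LpPoint p) : M.IsNonloop (f P) := by
  simpa using hf.indep_pair P P

end IsLpEmbedding

namespace IsKeyFamily

variable {p : ℕ} {M : Matroid α} {f : LpPoint p → α} {g : ZMod p → ZMod p → α}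

lemma mem_lineJI (hg : IsKeyFamily M f g) (a k t : ZMod p) :
    g a k ∈ lineJI M f (a + k * t) t := by
  have h := hg.2.2.1 k 0 a
  simp only [zero_add, mul_zero, sub_zero] at h
  exact mem_iInter.1 (h.symm.subset rfl) t

lemma collin (hg : IsKeyFamily M f g) (a k i : ZMod p) :
    Collin M {f (A i), f (C (a + k * i)), g a k} := by
  simpa using hg.2.2.2 k i (a + k * i) 0

lemma mem_ground (hf : IsLpEmbedding p M f) (hg : IsKeyFamily M f g) (a k : ZMod p) :
    g a k ∈ M.E :=
  hCl_subset_ground ((image_subset_range _ _).trans hf.2.1) (hg.mem_lineJI a k 0)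

variable [Fact p.Prime]

theorem loopless (hodd : p ≠ 2) (hf : IsLpEmbedding p M f) (hg : IsKeyFamily M f g) :
    M.Loopless := by
  refine Matroid.loopless_iff_forall_not_isLoop.2 fun ℓ _ hℓ ↦ ?_
  have h2 : (2 : ZMod p) ≠ 0 := Ring.two_ne_zero (by rwa [ZMod.ringChar_zmod_n])
  have hg1 : ∀ c, g c 1 = ℓ := by
    intro c
    have hdisj : Disjoint (f '' {A 0, B (0 + c), C c})
        (f '' {A 1, B (1 + (c + 1)), C (c + 1)}) := by
      rw [disjoint_image_iff hf.1]
      simpa using fun h ↦ h2 (by linear_combination h)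
    have h0 : g c 1 ∈ lineJI M f c 0 := by simpa using hg.mem_lineJI c 1 0
    have h1 : g c 1 ∈ lineJI M f (c + 1) 1 := by simpa using hg.mem_lineJI c 1 1
    replace h0 := hCl_subset_insert_of_isLoop hℓ _ h0
    replace h1 := hCl_subset_insert_of_isLoop hℓ _ h1
    by_contra hne
    exact hdisj.ne_of_mem (h0.resolve_left hne) (h1.resolve_left hne) rfl
  have hall : ∀ t, ℓ ∈ lineJI M f (0 + -1 * t) (0 + t) := fun t ↦ by
    have h := hg.mem_lineJI (-2 * t) 1 t
    rw [hg1] at h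
    convert h using 2 <;> ring
  have hB : ℓ = f (B 0) := by
    simpa [hg.2.1] using (hg.2.2.1 (-1) 0 0).subset (mem_iInter.2 hall)
  exact (hf.isNonloop (B 0)).not_isLoop (hB ▸ hℓ)

lemma ne_fA (hf : IsLpEmbedding p M f) (hg : IsKeyFamily M f g) (a k i : ZMod p) :
    g a k ≠ f (A i) := fun h ↦ by
  have hcol := collin_iff_eRk_le.1 (hg.collin a k (i + 1))
  have h3 :=
    hf.eRk_image_eq_three (isLpTriangle_A_C_A (by simp : i + 1 ≠ i) (a + k * (i + 1)))
  simp only [image_insert_eq, image_singleton] at h3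
  rw [h, h3] at hcol
  norm_num at hcol

theorem injective (hodd : p ≠ 2) (hf : IsLpEmbedding p M f) (hg : IsKeyFamily M f g) :
    Function.Injective (Function.uncurry g) := by
  rintro ⟨a, k⟩ ⟨b, k'⟩ (h : g a k = g b k')
  by_contra hne
  have := hg.loopless hodd hf
  have hx : M.IsNonloop (g a k) := M.isNonloop_of_loopless (hg.mem_ground hf a k)
  have hp : 2 < ENat.card (ZMod p) := by
    rw [ENat.card_eq_coe_fintype_card, ZMod.card]
    exact_mod_cast (Fact.out : p.Prime).two_le.lt_of_ne' hodd
  obtain ⟨i, hCi, hAi⟩ := exists_not_and_not_of_subsingleton hp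
    (subsingleton_setOf_add_mul_eq hne)
    (hx.subsingleton_setOf_not_indep_pair (e := (f <| A ·))
      (fun _ _ h ↦ by simpa using hf.1 h) fun _ _ ↦ hf.indep_pair _ _)
  rw [not_not] at hAi
  have hAg : f (A i) ≠ g a k := (hg.ne_fA hf a k i).symm
  have hcl : f '' {A i, C (a + k * i), C (b + k' * i)} ⊆ M.closure {f (A i), g a k} := by
    simp only [image_insert_eq, image_singleton, insert_subset_iff, singleton_subset_iff]
    exact ⟨M.mem_closure_of_mem' (mem_insert _ _) (hf.mem_ground _),
      (hg.collin a k i).mem_closure hAi hAg (hf.mem_ground _),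
      (h ▸ hg.collin b k' i).mem_closure hAi hAg (hf.mem_ground _)⟩
  have := calc (3 : ℕ∞) = M.eRk (f '' {A i, C (a + k * i), C (b + k' * i)}) :=
        (hf.eRk_image_eq_three (isLpTriangle_A_C_C i hCi)).symm
    _ ≤ M.eRk (M.closure {f (A i), g a k}) := M.eRk_mono hcl
    _ = 2 := by rw [M.eRk_closure_eq, hAi.eRk_eq_encard, encard_pair hAg]
  norm_num at this

lemma eq_iff (hodd : p ≠ 2) (hf : IsLpEmbedding p M f) (hg : IsKeyFamily M f g)
    {a k b k' : ZMod p} : g a k = g b k' ↔ a = b ∧ k = k' := by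
  rw [← Prod.mk.injEq]
  exact (hg.injective hodd hf).eq_iff (a := (a, k)) (b := (b, k'))

end IsKeyFamily

section CSet

variable {p : ℕ} [Fact p.Prime] {M : Matroid α} {f : LpPoint p → α} {g : ZMod p → ZMod p → α}

lemma cSet_nontrivial (hf : IsLpEmbedding p M f) (hg : IsKeyFamily M f g) (j i : ZMod p) :
    (cSet f g j i).Nontrivial :=
  ⟨f (A i), mem_insert _ _, g j 0, Or.inr ⟨0, by simp⟩, (hg.ne_fA hf j 0 i).symm⟩

lemma cSet_inter_cSet_of_ne_left (hodd : p ≠ 2) (hf : IsLpEmbedding p M f)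
    (hg : IsKeyFamily M f g) {j s : ZMod p} (hjs : j ≠ s) (i : ZMod p) :
    cSet f g j i ∩ cSet f g s i = {f (A i)} := by
  refine subset_antisymm ?_ (singleton_subset_iff.2 ⟨mem_insert _ _, mem_insert _ _⟩)
  rintro x ⟨rfl | ⟨k, rfl⟩, hx | ⟨k', hx⟩⟩
  · rfl
  · rfl
  · exact absurd hx (hg.ne_fA hf _ _ _)
  · obtain ⟨h, rfl⟩ := (hg.eq_iff hodd hf).1 hx
    exact absurd (by linear_combination h) hjs

lemma cSet_inter_cSet_of_ne_right (hodd : p ≠ 2) (hf : IsLpEmbedding p M f)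
    (hg : IsKeyFamily M f g) (j s : ZMod p) {i t : ZMod p} (hit : i ≠ t) :
    cSet f g j i ∩ cSet f g s t =
      {g (j - (j - s) / (i - t) * i) ((j - s) / (i - t))} := by
  have hit' : i - t ≠ 0 := sub_ne_zero.2 hit
  have hslope := div_mul_cancel₀ (j - s) hit'
  refine subset_antisymm ?_ (singleton_subset_iff.2
    ⟨Or.inr ⟨_, rfl⟩, Or.inr ⟨_, by congr 1; linear_combination -hslope⟩⟩)
  rintro x ⟨rfl | ⟨k, rfl⟩, hx | ⟨k', hx⟩⟩
  · exact absurd (hf.1 hx) (by simpa using hit)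
  · exact absurd hx.symm (hg.ne_fA hf _ _ _)
  · exact absurd hx (hg.ne_fA hf _ _ _)
  · obtain ⟨h, rfl⟩ := (hg.eq_iff hodd hf).1 hx
    obtain rfl : k = (j - s) / (i - t) := by
      rw [eq_div_iff hit']
      linear_combination -h
    rfl

end CSet

end HarmonicPaper

namespace HarmonicPaper
open LpPoint

theorem statement_10_general {α : Type*} (p : ℕ) [Fact p.Prime] (hodd : p ≠ 2)
    (M : Matroid α) (f : LpPoint p → α) (hf : IsLpEmbedding p M f)
    (g : ZMod p → ZMod p → α) (hg : IsKeyFamily M f g) :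
    ∀ i j s t : ZMod p, (j, i) ≠ (s, t) →
      cSet f g j i ≠ cSet f g s t ∧ ∃! x, x ∈ cSet f g j i ∩ cSet f g s t := by
  intro i j s t hne
  obtain ⟨x, hx⟩ : ∃ x, cSet f g j i ∩ cSet f g s t = {x} := by
    rcases eq_or_ne i t with rfl | hit
    · exact ⟨_, cSet_inter_cSet_of_ne_left hodd hf hg (fun h ↦ hne (by rw [h])) i⟩
    · exact ⟨_, cSet_inter_cSet_of_ne_right hodd hf hg j s hit⟩
  refine ⟨fun heq ↦ ?_, by rw [hx]; exact existsUnique_eq⟩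
  rw [heq, inter_self] at hx
  exact (cSet_nontrivial hf hg s t).not_subsingleton (hx ▸ subsingleton_singleton)

theorem statement_10 {α : Type*} (p : ℕ) [Fact p.Prime] (hodd : p ≠ 2)
    (M : Matroid α) (hM : IsHarmonic M) (f : LpPoint p → α) (hf : IsLpEmbedding p M f)
    (g : ZMod p → ZMod p → α) (hg : IsKeyFamily M f g) :
    ∀ i j s t : ZMod p, (j, i) ≠ (s, t) →
      cSet f g j i ≠ cSet f g s t ∧ ∃! x, x ∈ cSet f g j i ∩ cSet f g s t :=
  statement_10_general p hodd M f hf g hg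

end HarmonicPaper
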